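/- In the discrete-time model with i.i.d. random demand D and capacity C per period (independent of the initial backlog), the cumulative production Jₜ(i+1) stochastically dominates Jₜ(i), and Jₜ(i) + 1 stochastically dominates Jₜ(i+1), for every horizon t. -/
import Mathlib


/-- One period of the discrete-time capacitated production system: from backlog `q` and
cumulative production `j`, with demand `d` and capacity `c`, the backlog becomes
`(q + d − c)⁺` and production increases by `min (q + d) c`. -/
def dstep : ℕ × ℕ → ℕ × ℕ → ℕ × ℕ
  | (q, j), (d, c) => (q + d - c, j + min (q + d) c)

/-- Cumulative production after the periods in `w` starting from backlog `i`. -/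
def Jd (i : ℕ) (w : List (ℕ × ℕ)) : ℕ := (w.foldl dstep (i, 0)).2

/-- PMF of a word of `t` i.i.d. (demand, capacity) pairs, each drawn from `ν`. -/
noncomputable def iidPeriods (ν : PMF (ℕ × ℕ)) : ℕ → PMF (List (ℕ × ℕ))
  | 0 => PMF.pure []
  | t + 1 => ν.bind fun dc => (iidPeriods ν t).map (fun w => dc :: w)

lemma foldl_dstep_add (w : List (ℕ × ℕ)) : ∀ q j a : ℕ,
    w.foldl dstep (q, j + a) = ((w.foldl dstep (q, j)).1, (w.foldl dstep (q, j)).2 + a) := by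
  induction w with
  | nil => intro q j a; rfl
  | cons dc w ih =>
    obtain ⟨d, c⟩ := dc
    intro q j a
    simp only [List.foldl_cons, dstep]
    rw [show j + a + min (q + d) c = (j + min (q + d) c) + a by ring, ih]

lemma foldl_dstep_succ (w : List (ℕ × ℕ)) : ∀ q j : ℕ,
    w.foldl dstep (q + 1, j) = ((w.foldl dstep (q, j)).1 + 1, (w.foldl dstep (q, j)).2) ∨
    w.foldl dstep (q + 1, j) = ((w.foldl dstep (q, j)).1, (w.foldl dstep (q, j)).2 + 1) := by
  induction w with
  | nil => intro q j; left; rfl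
  | cons dc w ih =>
    obtain ⟨d, c⟩ := dc
    intro q j
    simp only [List.foldl_cons, dstep]
    rcases le_or_gt c (q + d) with h | h
    · have h1 : q + 1 + d - c = (q + d - c) + 1 := by omega
      have h2 : min (q + 1 + d) c = min (q + d) c := by omega
      rw [h1, h2]
      exact ih (q + d - c) (j + min (q + d) c)
    · have h1 : q + 1 + d - c = q + d - c := by omega
      have h2 : min (q + 1 + d) c = min (q + d) c + 1 := by omega
      rw [h1, h2, show j + (min (q + d) c + 1) = (j + min (q + d) c) + 1 by ring,
        foldl_dstep_add]
      right; rfl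

lemma Jd_sandwich (i : ℕ) (w : List (ℕ × ℕ)) :
    Jd i w ≤ Jd (i + 1) w ∧ Jd (i + 1) w ≤ Jd i w + 1 := by
  unfold Jd
  rcases foldl_dstep_succ w i 0 with h | h <;> rw [h] <;> simp

/-- With i.i.d. random demand and capacity per period, cumulative production `Jₜ(i+1)`
stochastically dominates `Jₜ(i)`, and `Jₜ(i) + 1` stochastically dominates `Jₜ(i+1)`,
for every horizon `t`. -/
theorem Jd_stochastic_sandwich (ν : PMF (ℕ × ℕ)) (t i j : ℕ) :
    (iidPeriods ν t).toOuterMeasure {w | j < Jd i w} ≤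
        (iidPeriods ν t).toOuterMeasure {w | j < Jd (i + 1) w} ∧
      (iidPeriods ν t).toOuterMeasure {w | j < Jd (i + 1) w} ≤
        (iidPeriods ν t).toOuterMeasure {w | j < Jd i w + 1} := by
  constructor
  · exact (iidPeriods ν t).toOuterMeasure.mono fun w hw =>
      lt_of_lt_of_le hw (Jd_sandwich i w).1
  · exact (iidPeriods ν t).toOuterMeasure.mono fun w hw =>
      lt_of_lt_of_le hw (Jd_sandwich i w).2
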